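/- The number of elements of the free tree monoid FT(X) on a totally ordered alphabet of size n equals a(n), where a(0) = 1 and a(k) = a(k−1)² + a(k−1). Equivalently, a word u over X is reduced if and only if: the largest letter y appears at most once in u, and if u = v·y·w then v and w are recursively reduced words over X \ {y}. -/

import Mathlib

/-- The defining relations of the free tree monoid `FT(X)`: `x·x = x` for every `x`, and
`y·x·y = y·x` whenever `x < y`. -/
def ftRel (X : Type*) [LinearOrder X] : FreeMonoid X → FreeMonoid X → Prop := fun a b =>
  (∃ x : X, a = FreeMonoid.of x * FreeMonoid.of x ∧ b = FreeMonoid.of x) ∨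
  (∃ x y : X, x < y ∧ a = FreeMonoid.of y * FreeMonoid.of x * FreeMonoid.of y ∧
    b = FreeMonoid.of y * FreeMonoid.of x)

/-- The free tree monoid `FT(X)` on a totally ordered alphabet `X`. -/
def FreeTreeMonoid (X : Type*) [LinearOrder X] :=
  (conGen (ftRel X)).Quotient

/-- The counting sequence `a(0) = 1`, `a(k) = a(k-1)² + a(k-1)`. -/
def ftCount : ℕ → ℕ
  | 0 => 1
  | k + 1 => ftCount k ^ 2 + ftCount k

/-- A word is *reduced* for the free tree monoid if it contains no factor `y ++ w ++ y` with all
letters of `w` strictly smaller than `y` (equivalently, no rewriting rule applies to it). -/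
def FTReduced {X : Type*} [LinearOrder X] (u : List X) : Prop :=
  ¬ ∃ (v w z : List X) (y : X), (∀ a ∈ w, a < y) ∧ u = v ++ [y] ++ w ++ [y] ++ z

/-!
Adjoin to `X` a new letter `⊤` above all others. For every word `p` over `X` the relations give
`⊤ p ⊤ = ⊤ p` (peel off the letters of `p` one at a time using `⊤ x ⊤ = ⊤ x`), so every element of
`FT(X ∪ {⊤})` either avoids `⊤` or is `v ⊤ w` with `v, w ∈ FT(X)`, and multiplying such forms
just concatenates around the first `⊤`. This makes `FT(X ∪ {⊤}) ≅ FT(X) ⊔ FT(X) × FT(X)`, whence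
`a(k) = a(k-1) + a(k-1)²`.

For the description of reduced words: if the largest letter `m` of a reduced word occurred twice,
two consecutive occurrences would form a forbidden factor; conversely a forbidden factor
`y w y` avoids `m`, since `m = y` would occur twice, so it lies inside one of the two sides
of the unique `m`.
-/

namespace FreeTreeMonoid

variable {X Y : Type*} [LinearOrder X] [LinearOrder Y]

instance : Monoid (FreeTreeMonoid X) := inferInstanceAs (Monoid (conGen (ftRel X)).Quotient)

def mk : FreeMonoid X →* FreeTreeMonoid X := (conGen (ftRel X)).mk'

def of (x : X) : FreeTreeMonoid X := mk (FreeMonoid.of x)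

theorem of_mul_self (x : X) : of x * of x = of x :=
  (Con.eq _).2 (ConGen.Rel.of _ _ (Or.inl ⟨x, rfl, rfl⟩))

theorem of_mul_of_mul_of {x y : X} (h : x < y) : of y * of x * of y = of y * of x :=
  (Con.eq _).2 (ConGen.Rel.of _ _ (Or.inr ⟨x, y, h, rfl, rfl⟩))

@[elab_as_elim]
theorem induction_on {P : FreeTreeMonoid X → Prop} (a : FreeTreeMonoid X) (one : P 1)
    (of_mul : ∀ x a, P a → P (of x * a)) : P a := by
  obtain ⟨u, rfl⟩ : ∃ u, mk u = a := Con.mk'_surjective a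
  induction u using FreeMonoid.recOn with
  | one => simpa using one
  | of_mul x u ih => rw [map_mul]; exact of_mul x _ ih

@[ext]
theorem hom_ext {M : Type*} [Monoid M] {f g : FreeTreeMonoid X →* M}
    (h : ∀ x, f (of x) = g (of x)) : f = g := by
  ext a
  induction a using induction_on with
  | one => simp
  | of_mul x a ih => simp [h, ih]

def lift {M : Type*} [Monoid M] (f : X → M) (idem : ∀ x, f x * f x = f x)
    (absorb : ∀ x y, x < y → f y * f x * f y = f y * f x) : FreeTreeMonoid X →* M :=
  Con.lift _ (FreeMonoid.lift f) <| Con.conGen_le.2 <| by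
    rintro _ _ (⟨x, rfl, rfl⟩ | ⟨x, y, hxy, rfl, rfl⟩)
    · simp [Con.ker_rel, idem]
    · simp [Con.ker_rel, absorb _ _ hxy]

@[simp]
theorem lift_of {M : Type*} [Monoid M] (f : X → M) (idem) (absorb) (x : X) :
    lift f idem absorb (of x) = f x :=
  (Con.lift_mk' _ _).trans (FreeMonoid.lift_eval_of _ _)

def map (f : X → Y) (hf : StrictMono f) : FreeTreeMonoid X →* FreeTreeMonoid Y :=
  lift (of ∘ f) (fun x => of_mul_self (f x)) (fun _ _ h => of_mul_of_mul_of (hf h))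

@[simp]
theorem map_of (f : X → Y) (hf : StrictMono f) (x : X) : map f hf (of x) = of (f x) :=
  lift_of _ _ _ x

def congr (e : X ≃o Y) : FreeTreeMonoid X ≃* FreeTreeMonoid Y :=
  (map e e.strictMono).toMulEquiv (map e.symm e.symm.strictMono) (by ext; simp) (by ext; simp)

instance [IsEmpty X] : Subsingleton (FreeTreeMonoid X) :=
  have h (a : FreeTreeMonoid X) : a = 1 := induction_on a rfl fun x => isEmptyElim x
  ⟨fun a b => (h a).trans (h b).symm⟩

end FreeTreeMonoid

/-- `base a` is an element not involving a new top letter `⊤`, and `node v w` stands for `v ⊤ w`;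
the product of two `node`s absorbs the second `⊤`, as `⊤ p ⊤ = ⊤ p`. -/
inductive TreeExt (M : Type*)
  | base : M → TreeExt M
  | node : M → M → TreeExt M

namespace TreeExt

variable {M : Type*}

def equivSum : TreeExt M ≃ M ⊕ M × M where
  toFun
    | base a => .inl a
    | node v w => .inr (v, w)
  invFun
    | .inl a => base a
    | .inr (v, w) => node v w
  left_inv := by rintro (_ | _) <;> rfl
  right_inv := by rintro (_ | ⟨_, _⟩) <;> rfl

theorem card : Nat.card (TreeExt M) = Nat.card M ^ 2 + Nat.card M := by
  rw [Nat.card_congr equivSum]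
  rcases finite_or_infinite M with hM | hM
  · rw [Nat.card_sum, Nat.card_prod]; ring
  · simp

variable [Monoid M]

instance : Mul (TreeExt M) where
  mul
    | base a, base b => base (a * b)
    | base a, node v w => node (a * v) w
    | node v w, base b => node v (w * b)
    | node v w, node v' w' => node v (w * v' * w')

@[simp] theorem base_mul_base (a b : M) : base a * base b = base (a * b) := rfl
@[simp] theorem base_mul_node (a v w : M) : base a * node v w = node (a * v) w := rfl
@[simp] theorem node_mul_base (v w b : M) : node v w * base b = node v (w * b) := rfl
@[simp] theorem node_mul_node (v w v' w' : M) : node v w * node v' w' = node v (w * v' * w') :=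
  rfl

instance : One (TreeExt M) := ⟨base 1⟩

theorem one_def : (1 : TreeExt M) = base 1 := rfl

instance : Monoid (TreeExt M) where
  mul_assoc := by rintro (_ | _) (_ | _) (_ | _) <;> simp [mul_assoc]
  one_mul := by rintro (_ | _) <;> simp [one_def]
  mul_one := by rintro (_ | _) <;> simp [one_def]

def top : TreeExt M := node 1 1

theorem top_mul_self : (top : TreeExt M) * top = top := by simp [top]

theorem top_mul_base_mul_top (a : M) : top * base a * top = top * base a := by simp [top]

end TreeExt

namespace FreeTreeMonoid

open TreeExt

variable {X : Type*} [LinearOrder X]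

def toWithTop : FreeTreeMonoid X →* FreeTreeMonoid (WithTop X) :=
  map (↑) WithTop.coe_strictMono

@[simp]
theorem toWithTop_of (x : X) : toWithTop (of x) = of (x : WithTop X) := map_of _ _ x

theorem of_top_mul_toWithTop_mul_of_top (a : FreeTreeMonoid X) :
    of ⊤ * toWithTop a * of ⊤ = of ⊤ * toWithTop a := by
  induction a using induction_on with
  | one => simp [of_mul_self]
  | of_mul x a ih =>
    have hx : of ⊤ * of (x : WithTop X) * of ⊤ = of ⊤ * of (x : WithTop X) :=
      of_mul_of_mul_of (WithTop.coe_lt_top x)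
    calc of ⊤ * toWithTop (of x * a) * of ⊤
        = of ⊤ * of (x : WithTop X) * of ⊤ * (toWithTop a * of ⊤) := by
          rw [hx]; simp [mul_assoc]
      _ = of ⊤ * of (x : WithTop X) * (of ⊤ * toWithTop a * of ⊤) := by simp only [mul_assoc]
      _ = of ⊤ * of (x : WithTop X) * of ⊤ * toWithTop a := by rw [ih]; simp only [mul_assoc]
      _ = of ⊤ * toWithTop (of x * a) := by rw [hx]; simp [mul_assoc]

def toTreeExt : FreeTreeMonoid (WithTop X) →* TreeExt (FreeTreeMonoid X) :=
  lift (WithTop.recTopCoe top fun x => base (of x))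
    (fun x => by
      induction x using WithTop.recTopCoe
      · exact top_mul_self
      · simp [of_mul_self])
    (fun x y hxy => by
      induction y using WithTop.recTopCoe with
      | top =>
        induction x using WithTop.recTopCoe
        · exact absurd hxy (lt_irrefl _)
        · exact top_mul_base_mul_top _
      | coe y =>
        induction x using WithTop.recTopCoe
        · exact absurd hxy not_top_lt
        · simp [of_mul_of_mul_of (WithTop.coe_lt_coe.1 hxy)])

def ofTreeExt : TreeExt (FreeTreeMonoid X) →* FreeTreeMonoid (WithTop X) where
  toFun
    | base a => toWithTop a
    | node v w => toWithTop v * of ⊤ * toWithTop w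
  map_one' := map_one toWithTop
  map_mul' := by
    rintro (a | ⟨v, w⟩) (b | ⟨v', w'⟩) <;> dsimp only <;> simp only [map_mul, mul_assoc]
    case node.node =>
      have key := congrArg (toWithTop v * · * toWithTop w')
        (of_top_mul_toWithTop_mul_of_top (w * v'))
      simpa only [map_mul, mul_assoc] using key.symm

@[simp]
theorem toTreeExt_of_top : toTreeExt (of (⊤ : WithTop X)) = top :=
  lift_of _ _ _ _

@[simp]
theorem toTreeExt_of_coe (x : X) : toTreeExt (of (x : WithTop X)) = base (of x) :=
  lift_of _ _ _ _

@[simp]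
theorem toTreeExt_toWithTop (a : FreeTreeMonoid X) : toTreeExt (toWithTop a) = base a := by
  induction a using induction_on with
  | one => rfl
  | of_mul x a ih => simp [ih]

def withTopEquiv : FreeTreeMonoid (WithTop X) ≃* TreeExt (FreeTreeMonoid X) :=
  toTreeExt.toMulEquiv ofTreeExt
    (by ext x; induction x using WithTop.recTopCoe <;> simp [ofTreeExt, top])
    (by ext (a | ⟨v, w⟩) <;> simp [ofTreeExt, top])

theorem card_fin (n : ℕ) : Nat.card (FreeTreeMonoid (Fin n)) = ftCount n := by
  induction n with
  | zero => exact Nat.card_unique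
  | succ n ih =>
    have e : Fin (n + 1) ≃o WithTop (Fin n) :=
      Fintype.orderIsoFinOfCardEq _ (by rw [Fintype.card_eq_nat_card]; simp [WithTop])
    rw [Nat.card_congr ((congr e).trans withTopEquiv).toEquiv, TreeExt.card, ih, ftCount]

theorem card_eq_ftCount [Fintype X] :
    Nat.card (FreeTreeMonoid X) = ftCount (Fintype.card X) := by
  rw [← card_fin, Nat.card_congr (congr (Fintype.orderIsoFinOfCardEq X rfl)).toEquiv]

end FreeTreeMonoid

namespace List

variable {α : Type*}

theorem IsInfix.left_or_right_of_notMem {l s t : List α} {a : α} (h : l <:+: s ++ a :: t)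
    (ha : a ∉ l) : l <:+: s ∨ l <:+: t := by
  obtain ⟨p, q, h⟩ := h
  rcases List.append_eq_append_iff.1 h with ⟨r, rfl, -⟩ | ⟨_ | ⟨b, r⟩, hs, ht⟩
  · exact Or.inl ⟨p, r, rfl⟩
  · exact Or.inl ⟨p, [], by simpa using hs⟩
  · obtain ⟨rfl, rfl⟩ := List.cons_eq_cons.1 ht
    rcases List.append_eq_append_iff.1 hs with ⟨r', -, rfl⟩ | ⟨_ | ⟨c, r'⟩, -, hr⟩
    · simp at ha
    · rw [List.nil_append] at hr
      exact absurd (hr ▸ List.mem_cons_self) ha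
    · obtain ⟨-, rfl⟩ := List.cons_eq_cons.1 hr
      exact Or.inr ⟨r', q, by simp⟩

end List

section FTReduced

variable {X : Type*} [LinearOrder X] {u l w : List X} {y : X}

theorem FTReduced.of_isInfix (h : FTReduced u) (hl : l <:+: u) : FTReduced l := by
  rintro ⟨v, w, z, y, hw, rfl⟩
  obtain ⟨s, t, rfl⟩ := hl
  exact h ⟨s ++ v, w, z ++ t, y, hw, by simp⟩

theorem not_ftReduced_cons_append_singleton (hw : ∀ a ∈ w, a < y) :
    ¬FTReduced (y :: (w ++ [y])) :=
  fun h => h ⟨[], w, [], y, hw, by simp⟩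

theorem FTReduced.count_le_one (h : FTReduced u) (hy : ∀ a ∈ u, a ≤ y) : u.count y ≤ 1 := by
  by_contra! hc
  obtain ⟨v, r, rfl, hv⟩ :=
    List.eq_append_cons_of_mem (List.count_pos_iff.1 (by omega : 0 < u.count y))
  have hr : y ∈ r := by
    rw [List.count_append, List.count_cons_self, List.count_eq_zero.2 hv] at hc
    exact List.count_pos_iff.1 (by omega)
  obtain ⟨w, z, rfl, hw⟩ := List.eq_append_cons_of_mem hr
  have hwy : ∀ a ∈ w, a < y := fun a ha =>
    (hy a (by simp [ha])).lt_of_ne (by rintro rfl; exact hw ha)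
  exact not_ftReduced_cons_append_singleton hwy (h.of_isInfix ⟨v, z, by simp⟩)

theorem ftReduced_iff : FTReduced u ↔
    ∀ y : X, (∀ a ∈ u, a ≤ y) →
      u.count y ≤ 1 ∧ ∀ v w : List X, u = v ++ [y] ++ w → FTReduced v ∧ FTReduced w := by
  refine ⟨fun h y hy => ⟨h.count_le_one hy, fun v w huvw => ?_⟩, ?_⟩
  · subst huvw
    exact ⟨h.of_isInfix ⟨[], [y] ++ w, by simp⟩, h.of_isInfix ⟨v ++ [y], [], by simp⟩⟩
  rintro h ⟨v, w, z, y, hw, rfl⟩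
  set u := v ++ [y] ++ w ++ [y] ++ z
  obtain ⟨m, hmu, hmax⟩ : ∃ m ∈ u, ∀ a ∈ u, a ≤ m :=
    ⟨u.max (by simp [u]), List.max_mem _, fun _ => List.le_max_of_mem⟩
  obtain ⟨hcount, hsplit⟩ := h m hmax
  have hym : y < m := by
    refine (hmax y (by simp [u])).lt_of_ne ?_
    rintro rfl
    simp [u] at hcount
    omega
  have hlt : ∀ a ∈ y :: (w ++ [y]), a < m := by
    intro a ha
    rcases List.mem_cons.1 ha with rfl | ha
    · exact hym
    rcases List.mem_append.1 ha with ha | ha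
    · exact (hw a ha).trans hym
    · exact List.mem_singleton.1 ha ▸ hym
  obtain ⟨s, t, hst⟩ := List.append_of_mem hmu
  obtain ⟨hs, ht⟩ := hsplit s t (by simpa using hst)
  have hinfix : y :: (w ++ [y]) <:+: s ++ m :: t := hst ▸ ⟨v, z, by simp [u]⟩
  rcases hinfix.left_or_right_of_notMem fun h => lt_irrefl _ (hlt m h) with hs' | ht'
  · exact not_ftReduced_cons_append_singleton hw (hs.of_isInfix hs')
  · exact not_ftReduced_cons_append_singleton hw (ht.of_isInfix ht')

end FTReduced

/-- The number of elements of the free tree monoid on an alphabet of size `n` is `a(n)`, where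
`a(0) = 1` and `a(k) = a(k-1)² + a(k-1)`. Equivalently, a word `u` is reduced if and only if,
for every letter `y` dominating all letters of `u` (in particular the largest letter of `X`),
`y` appears at most once in `u` and if `u = v·y·w` then `v` and `w` are (recursively) reduced
words over the letters strictly smaller than `y`. -/
theorem freeTreeMonoid_card {X : Type*} [LinearOrder X] [Fintype X] :
    Nat.card (FreeTreeMonoid X) = ftCount (Fintype.card X) ∧
    (∀ u : List X, FTReduced u ↔
      ∀ y : X, (∀ a ∈ u, a ≤ y) →
        u.count y ≤ 1 ∧ ∀ v w : List X, u = v ++ [y] ++ w → FTReduced v ∧ FTReduced w) :=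
  ⟨FreeTreeMonoid.card_eq_ftCount, fun _ => ftReduced_iff⟩
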